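/- arXiv:1209.3427 — 4 statements merged into one kernel-verified Lean document; each statement's English description precedes it below -/
import Mathlib

section
/- The kernel of the derivation D = z·∂/∂y + y·∂/∂x on C[x,y,z] equals the polynomial subalgebra C[z, p], where p = xz − (1/2)y². Moreover, z and p are algebraically independent over C. -/
open MvPolynomial

noncomputable section

/-- The polynomial ring ℂ[x,y,z], with x = X 0, y = X 1, z = X 2. -/
abbrev R3 : Type := MvPolynomial (Fin 3) ℂ

/-- The derivation D = z·∂/∂y + y·∂/∂x, i.e. D x = y, D y = z, D z = 0. -/
def D : Derivation ℂ R3 R3 := mkDerivation ℂ ![X 1, X 2, 0]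

/-- p = xz - (1/2)y² -/
def p : R3 := X 0 * X 2 - C (1/2) * X 1 ^ 2

/-- The exponential automorphism exp(qD) of ℂ³ (for q ∈ ker D), given by its
closed formula: since D q = 0, (qD)x = qy, (qD)²x = q²z, (qD)³x = 0, so
exp(qD) = (x + qy + q²z/2, y + qz, z). -/
def expMap (q : R3) : (Fin 3 → ℂ) → (Fin 3 → ℂ) :=
  fun a => ![a 0 + eval a q * a 1 + eval a q ^ 2 * a 2 / 2,
             a 1 + eval a q * a 2, a 2]

/-- A map ℂ³ → ℂ³ given coordinatewise by polynomials. -/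
def IsPolyMap (F : (Fin 3 → ℂ) → (Fin 3 → ℂ)) : Prop :=
  ∃ f : Fin 3 → R3, ∀ a i, F a i = eval a (f i)

/-- A polynomial automorphism of ℂ³: a polynomial map with a polynomial inverse. -/
def IsPolyAut (F : (Fin 3 → ℂ) → (Fin 3 → ℂ)) : Prop :=
  IsPolyMap F ∧ ∃ G, IsPolyMap G ∧ F ∘ G = id ∧ G ∘ F = id

/-- h' = exp(D) : (x,y,z) ↦ (x + y + z/2, y + z, z). -/
def h'map : (Fin 3 → ℂ) → (Fin 3 → ℂ) :=
  fun a => ![a 0 + a 1 + a 2 / 2, a 1 + a 2, a 2]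

/-!
Write `R3 = ℂ[y, z][x]`. If `D f = 0` and `f` has `x`-degree `d` with leading coefficient
`a ∈ ℂ[y, z]`, comparing `x^d`-coefficients gives `z ∂a/∂y = 0`, so `a ∈ ℂ[z]`. Since `p` has
leading coefficient `z` in `x`, the kernel element `z^d f - a p^d` has smaller `x`-degree; by
induction `z^k f ∈ ℂ[z, p]` for some `k`. The factor `z^k` can be cancelled inside `ℂ[z, p]`
because `p ≡ -y²/2 (mod z)` is transcendental over `ℂ`. Finally, `x ↦ 0` sends `z, p` to
`z, -y²/2`, which are algebraically independent.
-/

namespace MvPolynomial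

theorem apply_derivation_eq_of_forall_X {R B σ : Type*} [CommRing R] [CommRing B] [Algebra R B]
    (φ : MvPolynomial σ R →ₐ[R] B) (d : Derivation R (MvPolynomial σ R) (MvPolynomial σ R))
    (d' : Derivation R B B) (h : ∀ i, φ (d (X i)) = d' (φ (X i))) (f : MvPolynomial σ R) :
    φ (d f) = d' (φ f) := by
  induction f using MvPolynomial.induction_on with
  | C a => simp only [← algebraMap_eq, AlgHom.commutes, Derivation.map_algebraMap, map_zero]
  | add f g hf hg => simp only [map_add, hf, hg]
  | mul_X f i hf => simp only [Derivation.leibniz, map_add, map_mul, smul_eq_mul, hf, h]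

theorem notMem_vars_of_pderiv_eq_zero {R σ : Type*} [CommRing R] [IsDomain R] [CharZero R]
    {i : σ} {a : MvPolynomial σ R} (h : pderiv i a = 0) : i ∉ a.vars := by
  classical
  rw [mem_vars_iff_mem_support]
  rintro ⟨m, hm, him⟩
  obtain ⟨m', rfl⟩ : ∃ m', m = m' + Finsupp.single i 1 :=
    ⟨m - Finsupp.single i 1,
      (tsub_add_cancel_of_le (by simpa [Nat.one_le_iff_ne_zero] using him)).symm⟩
  have := coeff_pderiv (i := i) a m'
  rw [h, coeff_zero, eq_comm, mul_eq_zero] at this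
  exact mem_support_iff.mp hm (this.resolve_right (Nat.cast_add_one_ne_zero _))

end MvPolynomial

namespace Polynomial

theorem degree_C_mul_sub_C_mul_pow_lt {R : Type*} [CommRing R] {q r : R[X]} (hq : q ≠ 0)
    (hr : r.natDegree ≤ 1) :
    (C (r.coeff 1 ^ q.natDegree) * q - C q.leadingCoeff * r ^ q.natDegree).degree < q.degree := by
  rw [degree_eq_natDegree hq, degree_lt_iff_coeff_zero]
  intro m hm
  rw [coeff_sub, coeff_C_mul, coeff_C_mul]
  rcases hm.eq_or_lt with rfl | hm
  · have := coeff_pow_of_natDegree_le (m := q.natDegree) hr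
    rw [mul_one] at this
    rw [this, leadingCoeff]
    ring
  · have hrd : (r ^ q.natDegree).natDegree < m :=
      (natDegree_pow_le_of_le _ hr).trans_lt (by omega)
    rw [coeff_eq_zero_of_natDegree_lt hm, coeff_eq_zero_of_natDegree_lt hrd, mul_zero, mul_zero,
      sub_zero]

theorem transcendental_C_mul_X_pow {R : Type*} [CommRing R] [IsDomain R] {c : R} (hc : c ≠ 0)
    {n : ℕ} (hn : n ≠ 0) : Transcendental R (C c * X ^ n) :=
  Polynomial.transcendental _ (by rwa [natDegree_C_mul_X_pow _ _ hc])
    (mem_nonZeroDivisors_of_ne_zero (by rwa [leadingCoeff_C_mul_X_pow]))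

end Polynomial

@[simp] theorem D_X_zero : D (X 0) = X 1 := mkDerivation_X ℂ _ 0

@[simp] theorem D_X_one : D (X 1) = X 2 := mkDerivation_X ℂ _ 1

@[simp] theorem D_X_two : D (X 2) = 0 := mkDerivation_X ℂ _ 2

abbrev R2 : Type := MvPolynomial (Fin 2) ℂ

theorem finSuccEquiv_X_one : finSuccEquiv ℂ 2 (X 1) = Polynomial.C (X 0 : R2) :=
  finSuccEquiv_X_succ (j := 0)

theorem finSuccEquiv_X_two : finSuccEquiv ℂ 2 (X 2) = Polynomial.C (X 1 : R2) :=
  finSuccEquiv_X_succ (j := 1)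

/-- `D` in the coordinates `ℂ[y, z][x]`, where `y = X 0` and `z = X 1` in `R2`. -/
def Dpoly : Derivation ℂ (Polynomial R2) (Polynomial R2) :=
  Polynomial.C (X 0 : R2) • (Polynomial.derivative' (R := R2)).restrictScalars ℂ +
    PolynomialModule.equivPolynomialSelf.compDer
      ((X 1 : R2) • pderiv 0 : Derivation ℂ R2 R2).mapCoeffs

theorem coeff_Dpoly (q : Polynomial R2) (n : ℕ) :
    (Dpoly q).coeff n =
      X 0 * (q.coeff (n + 1) * ((n : R2) + 1)) + X 1 * pderiv 0 (q.coeff n) := by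
  rw [Dpoly, Derivation.add_apply, Polynomial.coeff_add]
  congr 1
  simp [Polynomial.coeff_derivative]

theorem Dpoly_X : Dpoly Polynomial.X = Polynomial.C (X 0) := by
  simp [Dpoly]

theorem Dpoly_C (a : R2) : Dpoly (Polynomial.C a) = Polynomial.C (X 1 * pderiv 0 a) := by
  simp [Dpoly]

theorem finSuccEquiv_D (f : R3) : finSuccEquiv ℂ 2 (D f) = Dpoly (finSuccEquiv ℂ 2 f) := by
  refine apply_derivation_eq_of_forall_X (finSuccEquiv ℂ 2).toAlgHom D Dpoly (fun i ↦ ?_) f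
  fin_cases i <;> simp [finSuccEquiv_X_zero, finSuccEquiv_X_one, finSuccEquiv_X_two, Dpoly_X,
    Dpoly_C]

theorem pderiv_leadingCoeff_eq_zero {f : R3} (hf : D f = 0) :
    pderiv 0 (finSuccEquiv ℂ 2 f).leadingCoeff = 0 := by
  set q := finSuccEquiv ℂ 2 f
  have h := congrArg (Polynomial.coeff · q.natDegree) (finSuccEquiv_D f)
  rw [coeff_Dpoly, Polynomial.coeff_eq_zero_of_natDegree_lt (Nat.lt_succ_self _), hf, map_zero,
    Polynomial.coeff_zero, zero_mul, mul_zero, zero_add] at h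
  exact (mul_eq_zero.mp h.symm).resolve_left (X_ne_zero 1)

abbrev zpSubalgebra : Subalgebra ℂ R3 := Algebra.adjoin ℂ {X 2, p}

theorem X_two_mem_zpSubalgebra : X 2 ∈ zpSubalgebra := Algebra.subset_adjoin (by simp)

theorem p_mem_zpSubalgebra : p ∈ zpSubalgebra := Algebra.subset_adjoin (by simp)

theorem finSuccEquiv_symm_C_mem_zpSubalgebra {a : R2} (ha : 0 ∉ a.vars) :
    (finSuccEquiv ℂ 2).symm (Polynomial.C a) ∈ zpSubalgebra := by
  have ha : a ∈ Algebra.adjoin ℂ {X 1} := by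
    rw [← Set.image_singleton, ← supported_eq_adjoin_X, mem_supported]
    intro i hi
    fin_cases i
    · exact absurd hi ha
    · rfl
  let ι : R2 →ₐ[ℂ] R3 := (finSuccEquiv ℂ 2).symm.toAlgHom.comp (Polynomial.CAlgHom)
  have hι : ι (X 1) = X 2 := by
    simp [ι, ← finSuccEquiv_X_two]
  have := Algebra.adjoin_image ℂ ι {X 1} ▸ Subalgebra.mem_map.mpr ⟨a, ha, rfl⟩
  rw [Set.image_singleton, hι] at this
  exact Algebra.adjoin_mono (by simp) this

theorem D_p : D p = 0 := by
  have h : (C 2⁻¹ : R3) * 2 = 1 := by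
    rw [← map_ofNat C 2, ← C_mul, inv_mul_cancel₀ two_ne_zero, C_1]
  simp [p, Derivation.leibniz_pow]
  linear_combination (-(X 1 * X 2) : R3) * h

theorem D_eq_zero_of_mem_zpSubalgebra {f : R3} (hf : f ∈ zpSubalgebra) : D f = 0 := by
  refine D.eqOn_adjoin (D2 := 0) ?_ hf
  rintro _ (rfl | rfl)
  · exact D_X_two
  · exact D_p

theorem finSuccEquiv_p : finSuccEquiv ℂ 2 p =
    Polynomial.C (X 1) * Polynomial.X - Polynomial.C (C (1 / 2) * X 0 ^ 2) := by
  have h : finSuccEquiv ℂ 2 (C (1 / 2)) = Polynomial.C (C (1 / 2)) := by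
    rw [← MvPolynomial.algebraMap_eq, AlgEquiv.commutes]; rfl
  rw [p, map_sub, map_mul, map_mul, map_pow, finSuccEquiv_X_zero, finSuccEquiv_X_one,
    finSuccEquiv_X_two, h, Polynomial.C_mul, Polynomial.C_pow]
  ring

theorem natDegree_finSuccEquiv_p_le : (finSuccEquiv ℂ 2 p).natDegree ≤ 1 := by
  rw [finSuccEquiv_p]; compute_degree

theorem coeff_finSuccEquiv_p_one : (finSuccEquiv ℂ 2 p).coeff 1 = X 1 := by
  rw [finSuccEquiv_p, Polynomial.coeff_sub, Polynomial.coeff_C_mul_X, Polynomial.coeff_C]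
  simp

theorem exists_X_two_pow_mul_mem_of_D_eq_zero {f : R3} (hf : D f = 0) :
    ∃ k, X 2 ^ k * f ∈ zpSubalgebra := by
  induction hq : (finSuccEquiv ℂ 2 f).degree using WellFoundedLT.induction generalizing f with
  | ind n ih =>
    subst hq
    by_cases hf0 : f = 0
    · exact ⟨0, by simp [hf0, zero_mem]⟩
    set q := finSuccEquiv ℂ 2 f
    set d := q.natDegree
    set a := (finSuccEquiv ℂ 2).symm (Polynomial.C q.leadingCoeff)
    have ha : a ∈ zpSubalgebra := finSuccEquiv_symm_C_mem_zpSubalgebra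
      (notMem_vars_of_pderiv_eq_zero (pderiv_leadingCoeff_eq_zero hf))
    have hmem : a * p ^ d ∈ zpSubalgebra := mul_mem ha (pow_mem p_mem_zpSubalgebra d)
    set g := X 2 ^ d * f - a * p ^ d
    have hg : D g = 0 := by
      simp [g, Derivation.leibniz, hf, D_eq_zero_of_mem_zpSubalgebra hmem,
        D_eq_zero_of_mem_zpSubalgebra (pow_mem X_two_mem_zpSubalgebra d)]
    have hdeg : (finSuccEquiv ℂ 2 g).degree < q.degree := by
      have hEg : finSuccEquiv ℂ 2 g = Polynomial.C ((finSuccEquiv ℂ 2 p).coeff 1 ^ d) * q -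
          Polynomial.C q.leadingCoeff * finSuccEquiv ℂ 2 p ^ d := by
        rw [coeff_finSuccEquiv_p_one, map_sub, map_mul, map_mul, map_pow, map_pow,
          finSuccEquiv_X_two, AlgEquiv.apply_symm_apply, Polynomial.C_pow]
      rw [hEg]
      exact Polynomial.degree_C_mul_sub_C_mul_pow_lt (EmbeddingLike.map_ne_zero_iff.mpr hf0)
        natDegree_finSuccEquiv_p_le
    obtain ⟨k, hk⟩ := ih _ hdeg hg rfl
    refine ⟨k + d, ?_⟩
    have : X 2 ^ (k + d) * f = X 2 ^ k * g + X 2 ^ k * (a * p ^ d) := by ring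
    rw [this]
    exact add_mem hk (mul_mem (pow_mem X_two_mem_zpSubalgebra k) hmem)

theorem transcendental_neg_half_mul_X_sq :
    Transcendental ℂ (Polynomial.C (-(1 / 2) : ℂ) * Polynomial.X ^ 2) :=
  Polynomial.transcendental_C_mul_X_pow (by norm_num) two_ne_zero

def evalZP : Polynomial (Polynomial ℂ) →ₐ[ℂ] R3 :=
  Polynomial.aevalTower (Polynomial.aeval p) (X 2)

theorem evalZP_X : evalZP Polynomial.X = X 2 := Polynomial.aevalTower_X _ _

theorem evalZP_C (c : Polynomial ℂ) : evalZP (Polynomial.C c) = Polynomial.aeval p c :=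
  Polynomial.aevalTower_C _ _ _

theorem range_evalZP : evalZP.range = zpSubalgebra := by
  apply le_antisymm
  · rintro _ ⟨Q, rfl⟩
    change evalZP Q ∈ _
    induction Q using Polynomial.induction_on' with
    | add Q Q' hQ hQ' => rw [map_add]; exact add_mem hQ hQ'
    | monomial n c =>
      rw [← Polynomial.C_mul_X_pow_eq_monomial, map_mul, map_pow]
      refine mul_mem ?_ (pow_mem ?_ n)
      · rw [evalZP_C]
        exact Algebra.adjoin_mono (by simp) (Polynomial.aeval_mem_adjoin_singleton ℂ p)
      · rw [evalZP_X]
        exact X_two_mem_zpSubalgebra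
  · refine Algebra.adjoin_le ?_
    rintro _ (rfl | rfl)
    · exact ⟨Polynomial.X, evalZP_X⟩
    · exact ⟨Polynomial.C Polynomial.X, (evalZP_C _).trans (Polynomial.aeval_X p)⟩

theorem mem_zpSubalgebra_of_X_two_mul_mem {f : R3} (hf : X 2 * f ∈ zpSubalgebra) :
    f ∈ zpSubalgebra := by
  rw [← range_evalZP, AlgHom.mem_range] at hf ⊢
  obtain ⟨Q, hQ⟩ := hf
  have hQ_split : evalZP Q = X 2 * evalZP Q.divX + Polynomial.aeval p (Q.coeff 0) := by
    conv_lhs => rw [← Polynomial.X_mul_divX_add Q]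
    rw [map_add, map_mul, evalZP_X, evalZP_C]
  have hc : Q.coeff 0 = 0 := by
    let ev : R3 →ₐ[ℂ] R3 := aeval ![X 0, X 1, 0]
    have hev : ev p =
        Polynomial.aeval (X 1) (Polynomial.C (-(1 / 2) : ℂ) * Polynomial.X ^ 2) := by
      simp [ev, p]
    have h0 : Polynomial.aeval (ev p) (Q.coeff 0) = 0 := by
      rw [Polynomial.aeval_algHom_apply, eq_sub_of_add_eq' hQ_split.symm, hQ]
      simp [ev]
    rw [hev] at h0
    exact transcendental_iff.mp
      (transcendental_polynomial_aeval_X ℂ (1 : Fin 3) transcendental_neg_half_mul_X_sq) _ h0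
  refine ⟨Q.divX, mul_left_cancel₀ (X_ne_zero 2) ?_⟩
  rw [← hQ, hQ_split, hc, map_zero, add_zero]

theorem mem_zpSubalgebra_of_X_two_pow_mul_mem {f : R3} (k : ℕ)
    (hf : X 2 ^ k * f ∈ zpSubalgebra) : f ∈ zpSubalgebra := by
  induction k with
  | zero => simpa using hf
  | succ k ih =>
    exact ih (mem_zpSubalgebra_of_X_two_mul_mem (by rwa [← mul_assoc, ← pow_succ']))

theorem algebraicIndependent_X_two_p : AlgebraicIndependent ℂ ![(X 2 : R3), p] := by
  let ρ : R3 →ₐ[ℂ] R2 := aeval ![0, X 1, X 0]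
  let g : Fin 2 → Polynomial ℂ := ![Polynomial.X, Polynomial.C (-(1 / 2) : ℂ) * Polynomial.X ^ 2]
  refine AlgebraicIndependent.of_comp ρ ?_
  have h : ⇑ρ ∘ ![X 2, p] = fun i ↦ Polynomial.aeval (X i : R2) (g i) := by
    funext i
    fin_cases i <;> simp [ρ, g, p]
  rw [h]
  refine MvPolynomial.algebraicIndependent_polynomial_aeval_X _ fun i ↦ ?_
  fin_cases i
  exacts [Polynomial.transcendental_X ℂ, transcendental_neg_half_mul_X_sq]

/-- ker D = ℂ[z, p], and z, p are algebraically independent over ℂ. -/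
theorem stmt_2 (D : Derivation ℂ R3 R3)
    (hx : D (X 0) = X 1) (hy : D (X 1) = X 2) (hz : D (X 2) = 0) :
    (∀ f : R3, D f = 0 ↔ f ∈ Algebra.adjoin ℂ ({X 2, p} : Set R3)) ∧
    AlgebraicIndependent ℂ ![(X 2 : R3), p] := by
  obtain rfl : D = _root_.D := derivation_ext fun i ↦ by fin_cases i <;> simp [hx, hy, hz]
  refine ⟨fun f ↦ ⟨fun hf ↦ ?_, D_eq_zero_of_mem_zpSubalgebra⟩, algebraicIndependent_X_two_p⟩
  obtain ⟨k, hk⟩ := exists_X_two_pow_mul_mem_of_D_eq_zero hf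
  exact mem_zpSubalgebra_of_X_two_pow_mul_mem k hk
end
end

section
/- Setting R = ker D = C[z, p] with p = xz − (1/2)y², one has R[x] = C[z, x, y²] as subalgebras of C[x,y,z], and there is a direct sum decomposition of C-vector spaces C[x,y,z] = R[x] ⊕ y·R[x]. -/
/-!
The involution `σ : y ↦ -y` fixes `k[z, x, y²]`, and every polynomial splits uniquely as
`a + y b` with `a, b ∈ k[z, x, y²]`, its `σ`-even and `σ`-odd parts. Since `2p = 2xz - y²`
lies in `ker D`, we get `k[z, x, y²] ⊆ R[x]`. Conversely, an element of `ker D` is constant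
along the flow `exp (T D) : (x, y, z) ↦ (x + T y + T² z / 2, y + T z, z)`, and at time
`T = -2y/z` (over the fraction field) this flow is `σ`. Hence `ker D` is `σ`-fixed, so it lies
in `k[z, x, y²]`.
-/

open MvPolynomial

noncomputable section

namespace Weitzenboeck

variable {k : Type*}

local notation:max "k[x,y,z]" => MvPolynomial (Fin 3) k
local notation:max "k(x,y,z)" => FractionRing (MvPolynomial (Fin 3) k)

section CommRing

variable [CommRing k]

def negX1 : k[x,y,z] →ₐ[k] k[x,y,z] := aeval ![X 0, -X 1, X 2]

@[simp] lemma negX1_X0 : negX1 (X 0 : k[x,y,z]) = X 0 := by simp [negX1]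
@[simp] lemma negX1_X1 : negX1 (X 1 : k[x,y,z]) = -X 1 := by simp [negX1]
@[simp] lemma negX1_X2 : negX1 (X 2 : k[x,y,z]) = X 2 := by simp [negX1]

variable (k) in
def evenSubalgebra : Subalgebra k k[x,y,z] := Algebra.adjoin k {X 2, X 0, X 1 ^ 2}

lemma X0_mem_evenSubalgebra : X 0 ∈ evenSubalgebra k := Algebra.subset_adjoin (by simp)
lemma X2_mem_evenSubalgebra : X 2 ∈ evenSubalgebra k := Algebra.subset_adjoin (by simp)
lemma X1_sq_mem_evenSubalgebra : X 1 ^ 2 ∈ evenSubalgebra k := Algebra.subset_adjoin (by simp)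

lemma evenSubalgebra_le_equalizer : evenSubalgebra k ≤ AlgHom.equalizer negX1 (AlgHom.id k _) :=
  Algebra.adjoin_le <| by rintro _ (rfl | rfl | rfl) <;> simp

lemma negX1_eq_self_of_mem {g : k[x,y,z]} (hg : g ∈ evenSubalgebra k) : negX1 g = g :=
  evenSubalgebra_le_equalizer hg

lemma exists_add_X1_mul (f : k[x,y,z]) :
    ∃ a ∈ evenSubalgebra k, ∃ b ∈ evenSubalgebra k, f = a + X 1 * b := by
  induction f using MvPolynomial.induction_on with
  | C c => exact ⟨C c, Subalgebra.algebraMap_mem _ c, 0, zero_mem _, by ring⟩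
  | add f g hf hg =>
    obtain ⟨a, ha, b, hb, rfl⟩ := hf
    obtain ⟨a', ha', b', hb', rfl⟩ := hg
    exact ⟨a + a', add_mem ha ha', b + b', add_mem hb hb', by ring⟩
  | mul_X f n hf =>
    obtain ⟨a, ha, b, hb, rfl⟩ := hf
    fin_cases n <;> simp only [Fin.zero_eta, Fin.mk_one, Fin.reduceFinMk, Fin.isValue]
    · exact ⟨a * X 0, mul_mem ha X0_mem_evenSubalgebra, b * X 0,
        mul_mem hb X0_mem_evenSubalgebra, by ring⟩
    · exact ⟨X 1 ^ 2 * b, mul_mem X1_sq_mem_evenSubalgebra hb, a, ha, by ring⟩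
    · exact ⟨a * X 2, mul_mem ha X2_mem_evenSubalgebra, b * X 2,
        mul_mem hb X2_mem_evenSubalgebra, by ring⟩

lemma D_two_mul_X0_mul_X2_sub_X1_sq
    (D : Derivation k (MvPolynomial (Fin 3) k) (MvPolynomial (Fin 3) k))
    (hx : D (X 0) = X 1) (hy : D (X 1) = X 2) (hz : D (X 2) = 0) :
    D (2 * X 0 * X 2 - X 1 ^ 2) = 0 := by
  have h2 : D 2 = 0 := by exact_mod_cast D.map_natCast 2
  simp [Derivation.leibniz, Derivation.leibniz_pow, hx, hy, hz, h2]
  ring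

end CommRing

section Field

variable [Field k]

variable (k) in
/-- `exp (T • D)` on the generators; the series stop because `D³ x = D² y = D z = 0`. -/
def flow : k[x,y,z] →ₐ[k] Polynomial k[x,y,z] :=
  aeval ![Polynomial.C (X 0) + Polynomial.C (X 1) * Polynomial.X
      + Polynomial.C (C 2⁻¹ * X 2) * Polynomial.X ^ 2,
    Polynomial.C (X 1) + Polynomial.C (X 2) * Polynomial.X, Polynomial.C (X 2)]

lemma eval_zero_flow (f : k[x,y,z]) : (flow k f).eval 0 = f := by
  induction f using MvPolynomial.induction_on with
  | C c => simp [flow]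
  | add f g hf hg => simp [hf, hg]
  | mul_X f n hf =>
    rw [map_mul, Polynomial.eval_mul, hf]
    fin_cases n <;> simp [flow]

variable [CharZero k]

lemma map_inv_two_mul_two {A : Type*} [Semiring A] (φ : k →+* A) : φ 2⁻¹ * 2 = 1 := by
  rw [← map_ofNat φ 2, ← map_mul, inv_mul_cancel₀ two_ne_zero, map_one]

lemma add_X1_mul_inj {a b a' b' : k[x,y,z]}
    (ha : a ∈ evenSubalgebra k) (hb : b ∈ evenSubalgebra k)
    (ha' : a' ∈ evenSubalgebra k) (hb' : b' ∈ evenSubalgebra k)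
    (h : a + X 1 * b = a' + X 1 * b') : a = a' ∧ b = b' := by
  have h' : a - X 1 * b = a' - X 1 * b' := by
    simpa [negX1_eq_self_of_mem, ha, hb, ha', hb', sub_eq_add_neg] using congrArg negX1 h
  have hbb' : b = b' := by
    have : (2 * X 1 : k[x,y,z]) * (b - b') = 0 := by linear_combination h - h'
    simpa [sub_eq_zero, X_ne_zero] using this
  exact ⟨by linear_combination h - X 1 * hbb', hbb'⟩

lemma algebraMap_negX1 (f : k[x,y,z]) :
    algebraMap k[x,y,z] k(x,y,z) (negX1 f) = Polynomial.aeval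
      (-2 * algebraMap k[x,y,z] k(x,y,z) (X 1) / algebraMap k[x,y,z] k(x,y,z) (X 2))
      (flow k f) := by
  have hz : algebraMap k[x,y,z] k(x,y,z) (X 2) ≠ 0 :=
    (IsFractionRing.injective _ _).ne_iff' (map_zero _) |>.mpr (X_ne_zero 2)
  refine congrArg (· f) (MvPolynomial.algHom_ext
    (f := (IsScalarTower.toAlgHom k _ k(x,y,z)).comp negX1)
    (g := ((Polynomial.aeval _).restrictScalars k).comp (flow k)) fun i => ?_)
  fin_cases i
  · have h := map_inv_two_mul_two ((algebraMap k[x,y,z] k(x,y,z)).comp C)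
    simp only [RingHom.comp_apply] at h
    simp [flow]
    field_simp
    rw [one_div]
    linear_combination -2 * (algebraMap k[x,y,z] k(x,y,z) (X 1)) ^ 2 * h
  · simp [flow]
    field_simp
    norm_num
  · simp [flow]

variable (D : Derivation k (MvPolynomial (Fin 3) k) (MvPolynomial (Fin 3) k))

lemma derivative_flow_X (hx : D (X 0) = X 1) (hy : D (X 1) = X 2) (hz : D (X 2) = 0)
    (n : Fin 3) : Polynomial.derivative (flow k (X n)) = flow k (D (X n)) := by
  fin_cases n
  · simp [flow, hx]
    linear_combination (Polynomial.C (X 2) * Polynomial.X) * map_inv_two_mul_two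
      (Polynomial.C.comp (C : k →+* MvPolynomial (Fin 3) k))
  · simp [flow, hy]
  · simp [flow, hz]

lemma derivative_flow (hx : D (X 0) = X 1) (hy : D (X 1) = X 2) (hz : D (X 2) = 0)
    (f : k[x,y,z]) : Polynomial.derivative (flow k f) = flow k (D f) := by
  induction f using MvPolynomial.induction_on with
  | C c => simp [flow, ← algebraMap_eq]
  | add f g hf hg => simp [hf, hg]
  | mul_X f n hf =>
    rw [map_mul, Polynomial.derivative_mul, hf, derivative_flow_X D hx hy hz, D.leibniz,
      smul_eq_mul, smul_eq_mul, map_add, map_mul, map_mul]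
    ring

lemma flow_eq_C_of_D_eq_zero (hx : D (X 0) = X 1) (hy : D (X 1) = X 2) (hz : D (X 2) = 0)
    {f : k[x,y,z]} (hf : D f = 0) : flow k f = Polynomial.C f := by
  rw [Polynomial.eq_C_of_derivative_eq_zero (p := flow k f)
      (by rw [derivative_flow D hx hy hz, hf, map_zero]),
    Polynomial.coeff_zero_eq_eval_zero, eval_zero_flow]

lemma negX1_eq_self_of_D_eq_zero (hx : D (X 0) = X 1) (hy : D (X 1) = X 2) (hz : D (X 2) = 0)
    {f : k[x,y,z]} (hf : D f = 0) : negX1 f = f := by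
  apply IsFractionRing.injective k[x,y,z] k(x,y,z)
  rw [algebraMap_negX1, flow_eq_C_of_D_eq_zero D hx hy hz hf, Polynomial.aeval_C]

lemma mem_evenSubalgebra_of_D_eq_zero (hx : D (X 0) = X 1) (hy : D (X 1) = X 2)
    (hz : D (X 2) = 0) {f : k[x,y,z]} (hf : D f = 0) : f ∈ evenSubalgebra k := by
  obtain ⟨a, ha, b, hb, rfl⟩ := exists_add_X1_mul f
  have hneg : a + X 1 * b = a + X 1 * -b := by
    simpa [negX1_eq_self_of_mem ha, negX1_eq_self_of_mem hb]
      using (negX1_eq_self_of_D_eq_zero D hx hy hz hf).symm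
  have hb0 : b = 0 := CharZero.eq_neg_self_iff.mp (add_X1_mul_inj ha hb ha (neg_mem hb) hneg).2
  simpa [hb0] using ha

theorem adjoin_ker_union_X0 (hx : D (X 0) = X 1) (hy : D (X 1) = X 2) (hz : D (X 2) = 0) :
    Algebra.adjoin k ({f | D f = 0} ∪ {X 0}) = evenSubalgebra k := by
  apply le_antisymm
  · refine Algebra.adjoin_le (Set.union_subset
      (fun f hf => mem_evenSubalgebra_of_D_eq_zero D hx hy hz hf) ?_)
    simpa using X0_mem_evenSubalgebra
  · refine Algebra.adjoin_le ?_
    have hX0 : X 0 ∈ Algebra.adjoin k ({f | D f = 0} ∪ {X 0}) := Algebra.subset_adjoin (by simp)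
    have hX2 : X 2 ∈ Algebra.adjoin k ({f | D f = 0} ∪ {X 0}) :=
      Algebra.subset_adjoin (Or.inl hz)
    have hp : 2 * X 0 * X 2 - X 1 ^ 2 ∈ Algebra.adjoin k ({f | D f = 0} ∪ {X 0}) :=
      Algebra.subset_adjoin (Or.inl (D_two_mul_X0_mul_X2_sub_X1_sq D hx hy hz))
    rintro _ (rfl | rfl | rfl)
    · exact hX2
    · exact hX0
    · rw [show (X 1 ^ 2 : k[x,y,z]) = 2 * X 0 * X 2 - (2 * X 0 * X 2 - X 1 ^ 2) by ring]
      exact sub_mem (mul_mem (mul_mem (ofNat_mem _ 2) hX0) hX2) hp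

end Field

end Weitzenboeck

/-- R[x] = ℂ[z, x, y²] where R = ker D, and
ℂ[x,y,z] = R[x] ⊕ y·R[x] as ℂ-vector spaces (unique decomposition). -/
theorem stmt_3 (D : Derivation ℂ R3 R3)
    (hx : D (X 0) = X 1) (hy : D (X 1) = X 2) (hz : D (X 2) = 0) :
    Algebra.adjoin ℂ ({f : R3 | D f = 0} ∪ {X 0}) =
      Algebra.adjoin ℂ ({X 2, X 0, X 1 ^ 2} : Set R3) ∧
    ∀ f : R3, ∃! ab : R3 × R3,
      ab.1 ∈ Algebra.adjoin ℂ ({f : R3 | D f = 0} ∪ {X 0}) ∧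
      ab.2 ∈ Algebra.adjoin ℂ ({f : R3 | D f = 0} ∪ {X 0}) ∧
      f = ab.1 + X 1 * ab.2 := by
  have hR := Weitzenboeck.adjoin_ker_union_X0 D hx hy hz
  refine ⟨hR, fun f => ?_⟩
  rw [hR]
  obtain ⟨a, ha, b, hb, rfl⟩ := Weitzenboeck.exists_add_X1_mul f
  refine ⟨(a, b), ⟨ha, hb, rfl⟩, ?_⟩
  rintro ⟨a', b'⟩ ⟨ha', hb', h⟩
  obtain ⟨rfl, rfl⟩ := Weitzenboeck.add_X1_mul_inj ha' hb' ha hb h.symm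
  rfl
end
end

section
/- If f ∈ Aut(C³) commutes with h' = exp(D) and has third coordinate f₃ = z and scaling factor s = 1 in the decomposition f = (r + x + qy, y + qz, z) with r, q ∈ ker D, then f ∘ exp(qD)^{-1} = (x + r − (1/2)q²z, y, z). -/
open MvPolynomial

noncomputable section

/-! Elements of `ker D` are invariant under `exp(qD)`: along the polynomial curve
`t ↦ exp(t q(b) D) b`, which joins `b` to `exp(qD) b`, any `s` has derivative `q(b) · (D s)`,
so `s` is constant there when `D s = 0`. Hence `q` and `r` take the same values at `G a` and at
`a = exp(qD)(G a)`, and the formula is then a coordinate computation. -/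

section IntegralCurve

variable {σ R : Type*} [CommRing R] (δ : Derivation R (MvPolynomial σ R) (MvPolynomial σ R))
  {γ : σ → Polynomial R} {c : Polynomial R}

theorem derivative_aeval_of_isIntegralCurve
    (hγ : ∀ i, Polynomial.derivative (γ i) = c * aeval γ (δ (X i))) (s : MvPolynomial σ R) :
    Polynomial.derivative (aeval γ s) = c * aeval γ (δ s) := by
  induction s using MvPolynomial.induction_on with
  | C a =>
    have hC : δ (C a) = 0 := δ.map_algebraMap a
    rw [hC, aeval_C, Polynomial.algebraMap_eq, Polynomial.derivative_C, map_zero, mul_zero]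
  | add f g hf hg => simp only [map_add, hf, hg, mul_add]
  | mul_X f i hf =>
    simp only [Derivation.leibniz, smul_eq_mul, map_add, map_mul, aeval_X,
      Polynomial.derivative_mul, hf, hγ i]
    ring

theorem eval_eq_of_isIntegralCurve [IsAddTorsionFree R]
    (hγ : ∀ i, Polynomial.derivative (γ i) = c * aeval γ (δ (X i)))
    {s : MvPolynomial σ R} (hs : δ s = 0) (t u : R) :
    eval (fun i => (γ i).eval t) s = eval (fun i => (γ i).eval u) s := by
  have hconst := Polynomial.eq_C_of_derivative_eq_zero <| by
    rw [derivative_aeval_of_isIntegralCurve δ hγ, hs, map_zero, mul_zero]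
  have hev (t : R) : (aeval γ s).eval t = eval (fun i => (γ i).eval t) s := by
    rw [aeval_def, polynomial_eval_eval₂]
    congr 1
    ext
    simp
  rw [← hev, ← hev, hconst, Polynomial.eval_C, Polynomial.eval_C]

end IntegralCurve

/-- The orbit `t ↦ exp(t Q D) b`, which at `t = 1` is `expMap q b` when `Q = q(b)`. -/
def expCurve (b : Fin 3 → ℂ) (Q : ℂ) : Fin 3 → Polynomial ℂ :=
  ![Polynomial.C (b 0) + Polynomial.C (Q * b 1) * Polynomial.X
      + Polynomial.C (Q ^ 2 * b 2 / 2) * Polynomial.X ^ 2,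
    Polynomial.C (b 1) + Polynomial.C (Q * b 2) * Polynomial.X,
    Polynomial.C (b 2)]

theorem derivative_expCurve (b : Fin 3 → ℂ) (Q : ℂ) (i : Fin 3) :
    Polynomial.derivative (expCurve b Q i) = Polynomial.C Q * aeval (expCurve b Q) (D (X i)) := by
  rw [D, mkDerivation_X]
  fin_cases i
  · simp only [expCurve, Fin.zero_eta, Matrix.cons_val_zero, Matrix.cons_val_one, aeval_X,
      Polynomial.derivative_add, Polynomial.derivative_C, Polynomial.derivative_C_mul_X,
      Polynomial.derivative_C_mul_X_sq, zero_add, mul_add, ← mul_assoc, ← Polynomial.C_mul]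
    congr 3
    ring
  · simp [expCurve]
  · simp [expCurve]

theorem eval_expMap_of_D_eq_zero (q : R3) (b : Fin 3 → ℂ) {s : R3} (hs : D s = 0) :
    eval (expMap q b) s = eval b s := by
  have h := eval_eq_of_isIntegralCurve D (derivative_expCurve b (eval b q)) hs 1 0
  have h1 : (fun i => (expCurve b (eval b q) i).eval 1) = expMap q b := by
    funext i; fin_cases i <;> simp [expCurve, expMap]
  have h0 : (fun i => (expCurve b (eval b q) i).eval 0) = b := by
    funext i; fin_cases i <;> simp [expCurve]
  rwa [h1, h0] at h

theorem stmt_12_general (r q : R3) (hr : D r = 0) (hq : D q = 0)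
    (G : (Fin 3 → ℂ) → (Fin 3 → ℂ))
    (hG₁ : expMap q ∘ G = id) :
    (fun a : Fin 3 → ℂ =>
        ![a 0 + eval a r + eval a q * a 1, a 1 + eval a q * a 2, a 2]) ∘ G =
      fun a : Fin 3 → ℂ =>
        ![a 0 + eval a r - eval a q ^ 2 * a 2 / 2, a 1, a 2] := by
  funext a
  rw [Function.comp_apply]
  have hb : expMap q (G a) = a := congrFun hG₁ a
  generalize G a = b at hb ⊢
  subst hb
  simp only [eval_expMap_of_D_eq_zero q b hq, eval_expMap_of_D_eq_zero q b hr]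
  funext i
  fin_cases i <;> simp [expMap]; ring

/-- if f = (r + x + qy, y + qz, z) with r, q ∈ ker D, then
f ∘ exp(qD)⁻¹ = (x + r - (1/2)q²z, y, z). -/
theorem stmt_12 (r q : R3) (hr : D r = 0) (hq : D q = 0)
    (G : (Fin 3 → ℂ) → (Fin 3 → ℂ))
    (hG₁ : expMap q ∘ G = id) (hG₂ : G ∘ expMap q = id) :
    (fun a : Fin 3 → ℂ =>
        ![a 0 + eval a r + eval a q * a 1, a 1 + eval a q * a 2, a 2]) ∘ G =
      fun a : Fin 3 → ℂ =>
        ![a 0 + eval a r - eval a q ^ 2 * a 2 / 2, a 1, a 2] :=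
  stmt_12_general r q hr hq G hG₁
end
end

section
/- In Aut(C³), the following identity holds: (x−1, y, z) ∘ exp(pD) ∘ (x+1, y, z) = exp((p + z)D) = exp(pD) ∘ exp(zD), where D(x) = y, D(y) = z, D(z) = 0 and p = xz − y²/2. -/
open MvPolynomial

noncomputable section

/-- The translation (x + c, y, z). -/
def transl (c : ℂ) : (Fin 3 → ℂ) → (Fin 3 → ℂ) :=
  fun a => ![a 0 + c, a 1, a 2]

/-- (x−1,y,z) ∘ exp(pD) ∘ (x+1,y,z) = exp((p+z)D) = exp(pD) ∘ exp(zD). -/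
theorem stmt_17 :
    transl (-1) ∘ expMap p ∘ transl 1 = expMap (p + X 2) ∧
    expMap (p + X 2) = expMap p ∘ expMap (X 2) := by
  constructor
  · funext a
    funext i
    fin_cases i
    · simp only [Function.comp_apply, expMap, transl, p]
      simp
      ring
    · simp only [Function.comp_apply, expMap, transl, p]
      simp
      exact Or.inl (by ring)
    · simp only [Function.comp_apply, expMap, transl, p]
      simp
  · funext a
    funext i
    fin_cases i
    · simp only [Function.comp_apply, expMap, transl, p]
      simp
      ring
    · simp only [Function.comp_apply, expMap, transl, p]
      simp
      ring
    · simp only [Function.comp_apply, expMap, transl, p]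
      simp
end
end
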